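/- arXiv:0709.0313 — 2 statements merged into one kernel-verified Lean document; each statement's English description precedes it below -/
import Mathlib

section
/- The set W = {x ∈ (0,1) : x irrational and a_n ≥ n·log n for infinitely many n} has full Lebesgue measure in (0,1), where a_n are the partial quotients of x. -/
open Filter MeasureTheory Real Topology

/-- The Gauss map `x ↦ {1/x}`. -/
noncomputable def gaussMap (x : ℝ) : ℝ := Int.fract x⁻¹

/-- `partQuot x n` is the `n`-th partial quotient `aₙ` of the regular continued fraction
expansion `x = [a₁, a₂, …]` of `x ∈ (0,1)` (meaningful for `n ≥ 1`). -/
noncomputable def partQuot (x : ℝ) (n : ℕ) : ℕ := (⌊(gaussMap^[n - 1] x)⁻¹⌋).toNat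

/-- `cfQ x n` is the denominator `qₙ` of the `n`-th continued fraction convergent
`pₙ/qₙ = [a₁, …, aₙ]` of `x`, given by `q₀ = 1`, `q₁ = a₁`, `qₙ = aₙ qₙ₋₁ + qₙ₋₂`. -/
noncomputable def cfQ (x : ℝ) : ℕ → ℤ
  | 0 => 1
  | 1 => partQuot x 1
  | (n + 2) => partQuot x (n + 2) * cfQ x (n + 1) + cfQ x n

/-- `cfP x n` is the numerator `pₙ` of the `n`-th continued fraction convergent of `x`,
given by `p₀ = 0`, `p₁ = 1`, `pₙ = aₙ pₙ₋₁ + pₙ₋₂`. -/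
noncomputable def cfP (x : ℝ) : ℕ → ℤ
  | 0 => 0
  | 1 => 1
  | (n + 2) => partQuot x (n + 2) * cfP x (n + 1) + cfP x n

/-!
The irrationals of `(0,1)` whose expansion starts with `[a₁, …, aₙ]` lie between `[a₁, …, aₙ]` and
`[a₁, …, aₙ + 1]`, at distance `1 / (qₙ (qₙ + qₙ₋₁))`, and the lengths of the sub-intervals with
`aₙ₊₁ = b` for `1 ≤ b < K` telescope to at most `1 - 1/K` times that length. By induction, inside a
cylinder of rank `m` the points with `a_{m+i+1} < φ(m+i+1)` for all `i < j` have measure at most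
`∏_{i<j} (1 - 1/φ(m+i+1)) ≤ exp (-∑_{i<j} 1/φ(m+i+1))`, which tends to `0` when `∑ 1/φ(n)`
diverges; countably many cylinders cover the points with `aₙ < φ(n)` for all large `n`. For
`φ(n) = ⌈n log n⌉` the series diverges by Cauchy condensation.
-/

lemma mobius_sub_mobius {A B C D u v : ℝ} (hu : C * u + D ≠ 0) (hv : C * v + D ≠ 0) :
    (A * u + B) / (C * u + D) - (A * v + B) / (C * v + D) =
      (A * D - B * C) * (u - v) / ((C * u + D) * (C * v + D)) := by
  rw [div_sub_div _ _ hu hv]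
  ring

lemma mobius_mem_uIcc {A B C D t : ℝ} (hC : 0 ≤ C) (hD : 0 < D) (ht : t ∈ Set.Icc 0 1) :
    (A * t + B) / (C * t + D) ∈
      Set.uIcc ((A * 0 + B) / (C * 0 + D)) ((A * 1 + B) / (C * 1 + D)) := by
  have hpos : ∀ s, 0 ≤ s → 0 < C * s + D := fun s hs => by positivity
  have h0 := mobius_sub_mobius (A := A) (B := B) (hpos t ht.1).ne' (hpos 0 le_rfl).ne'
  have h1 := mobius_sub_mobius (A := A) (B := B) (hpos 1 zero_le_one).ne' (hpos t ht.1).ne'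
  have hden0 := mul_pos (hpos t ht.1) (hpos 0 le_rfl)
  have hden1 := mul_pos (hpos 1 zero_le_one) (hpos t ht.1)
  have ht0 : 0 ≤ t - 0 := by linarith [ht.1]
  have ht1 : 0 ≤ 1 - t := by linarith [ht.2]
  rcases le_total 0 (A * D - B * C) with hδ | hδ
  · refine Set.mem_uIcc_of_le ?_ ?_
    · have := div_nonneg (mul_nonneg hδ ht0) hden0.le
      linarith
    · have := div_nonneg (mul_nonneg hδ ht1) hden1.le
      linarith
  · refine Set.mem_uIcc_of_ge ?_ ?_
    · have := div_nonpos_of_nonpos_of_nonneg (mul_nonpos_of_nonpos_of_nonneg hδ ht1) hden1.le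
      linarith
    · have := div_nonpos_of_nonpos_of_nonneg (mul_nonpos_of_nonpos_of_nonneg hδ ht0) hden0.le
      linarith

lemma sum_Ico_inv_mul_le {C D : ℝ} (hC : 0 ≤ C) (hD : 0 < D) (K : ℕ) :
    ∑ b ∈ Finset.Ico 1 K, ((C + b * D) * (D + (C + b * D)))⁻¹ ≤
      (1 - (K : ℝ)⁻¹) * (D * (C + D))⁻¹ := by
  rcases Nat.eq_zero_or_pos K with rfl | hK
  · simp only [Finset.Ico_eq_empty_of_le zero_le_one, Finset.sum_empty, CharP.cast_eq_zero,
      inv_zero, sub_zero, one_mul]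
    positivity
  set g : ℕ → ℝ := fun b => (D * (C + b * D))⁻¹
  have hterm : ∀ b ∈ Finset.Ico 1 K,
      ((C + b * D) * (D + (C + b * D)))⁻¹ = -(g (b + 1) - g b) := by
    intro b hb
    have hb : (1 : ℝ) ≤ b := by exact_mod_cast (Finset.mem_Ico.1 hb).1
    have h0 : C + b * D ≠ 0 := by nlinarith
    have h1 : C + (b + 1) * D ≠ 0 := by nlinarith
    simp only [g]
    push_cast
    field_simp
    ring
  have hgK : (K : ℝ)⁻¹ * g 1 ≤ g K := by
    simp only [g, Nat.cast_one, one_mul, ← mul_inv]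
    refine inv_anti₀ (by positivity) ?_
    have : (1 : ℝ) ≤ K := by exact_mod_cast hK
    nlinarith [mul_nonneg (mul_nonneg (sub_nonneg.2 this) hD.le) hC]
  rw [Finset.sum_congr rfl hterm, Finset.sum_neg_distrib, Finset.sum_Ico_sub g hK]
  simp only [g, Nat.cast_one, one_mul] at hgK ⊢
  linarith

lemma tendsto_prod_one_sub_inv_nhds_zero {k : ℕ → ℕ} (hk : ¬ Summable fun i => (k i : ℝ)⁻¹) :
    Tendsto (fun j => ∏ i ∈ Finset.range j, (1 - (k i : ℝ)⁻¹)) atTop (𝓝 0) := by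
  have hsum := (not_summable_iff_tendsto_nat_atTop_of_nonneg fun i => by positivity).1 hk
  refine tendsto_of_tendsto_of_tendsto_of_le_of_le tendsto_const_nhds
    (tendsto_exp_atBot.comp (tendsto_neg_atTop_atBot.comp hsum))
    (fun j => Finset.prod_nonneg fun i _ => sub_nonneg.2 (Nat.cast_inv_le_one _)) fun j => ?_
  calc ∏ i ∈ Finset.range j, (1 - (k i : ℝ)⁻¹)
      ≤ ∏ i ∈ Finset.range j, exp (-(k i : ℝ)⁻¹) :=
        Finset.prod_le_prod (fun i _ => sub_nonneg.2 (Nat.cast_inv_le_one _))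
          fun i _ => one_sub_le_exp_neg _
    _ = exp (-∑ i ∈ Finset.range j, (k i : ℝ)⁻¹) := by
        rw [← exp_sum, Finset.sum_neg_distrib]

lemma not_summable_inv_mul_log : ¬ Summable fun n : ℕ => ((n : ℝ) * log n)⁻¹ := by
  have hmono : ∀ᶠ n : ℕ in atTop, ((n + 1 : ℕ) * log (n + 1 : ℕ) : ℝ)⁻¹ ≤ (n * log n : ℝ)⁻¹ := by
    filter_upwards [eventually_ge_atTop 2] with n hn
    have hn' : (2 : ℝ) ≤ n := by exact_mod_cast hn
    have hlog : 0 < log n := log_pos (by linarith)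
    refine inv_anti₀ (by positivity) (mul_le_mul (by push_cast; linarith)
      (log_le_log (by linarith) (by push_cast; linarith)) hlog.le (by positivity))
  rw [← summable_condensed_iff_of_eventually_nonneg
    (Eventually.of_forall fun n => by positivity) hmono]
  intro h
  refine Real.not_summable_natCast_inv ((h.mul_left (log 2)).congr fun k => ?_)
  have hlog : log 2 ≠ 0 := (log_pos one_lt_two).ne'
  push_cast
  rw [log_pow]
  field_simp

lemma not_summable_inv_ceil_mul_log : ¬ Summable fun n : ℕ => (⌈(n : ℝ) * log n⌉₊ : ℝ)⁻¹ := by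
  refine fun h => not_summable_inv_mul_log (.of_norm_bounded_eventually_nat (h.mul_left 2) ?_)
  filter_upwards [eventually_ge_atTop 3] with n hn
  have hn' : (3 : ℝ) ≤ n := by exact_mod_cast hn
  have hlog : 1 ≤ log n := by
    rw [le_log_iff_exp_le (by linarith)]
    linarith [exp_one_lt_d9]
  have hceil : (⌈(n : ℝ) * log n⌉₊ : ℝ) ≤ 2 * (n * log n) := by
    linarith [Nat.ceil_lt_add_one (by positivity : (0 : ℝ) ≤ n * log n),
      one_le_mul_of_one_le_of_one_le (by linarith : (1 : ℝ) ≤ n) hlog]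
  have hpos : (0 : ℝ) < ⌈(n : ℝ) * log n⌉₊ := Nat.cast_pos.2 (Nat.ceil_pos.2 (by positivity))
  calc ‖((n : ℝ) * log n)⁻¹‖ = 2 * (2 * (n * log n))⁻¹ := by
        rw [Real.norm_of_nonneg (by positivity)]
        field_simp
    _ ≤ 2 * (⌈(n : ℝ) * log n⌉₊ : ℝ)⁻¹ := by gcongr

def irrIoo : Set ℝ := Set.Ioo 0 1 ∩ {x | Irrational x}

section GaussMap

variable {x : ℝ}

lemma partQuot_succ (x : ℝ) (n : ℕ) : partQuot x (n + 1) = partQuot (gaussMap^[n] x) 1 := by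
  simp [partQuot]

lemma partQuot_add_two (x : ℝ) (n : ℕ) : partQuot x (n + 2) = partQuot (gaussMap x) (n + 1) := by
  rw [partQuot_succ x (n + 1), partQuot_succ (gaussMap x) n, Function.iterate_succ_apply]

lemma natCast_partQuot_one (hx : x ∈ Set.Ioo 0 1) : (partQuot x 1 : ℝ) = ⌊x⁻¹⌋ := by
  have : 0 ≤ ⌊x⁻¹⌋ := Int.floor_nonneg.2 (inv_nonneg.2 hx.1.le)
  rw [partQuot, Nat.sub_self, Function.iterate_zero_apply, ← Int.cast_natCast,
    Int.toNat_of_nonneg this]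

lemma one_le_partQuot_one (hx : x ∈ Set.Ioo 0 1) : 1 ≤ partQuot x 1 := by
  have h : (1 : ℝ) ≤ ⌊x⁻¹⌋ := by
    exact_mod_cast Int.le_floor.2 (by exact_mod_cast (one_lt_inv₀ hx.1).2 hx.2 |>.le)
  exact_mod_cast (natCast_partQuot_one hx).symm ▸ h

lemma inv_partQuot_one_add_gaussMap (hx : x ∈ Set.Ioo 0 1) :
    ((partQuot x 1 : ℝ) + gaussMap x)⁻¹ = x := by
  rw [natCast_partQuot_one hx, gaussMap, Int.floor_add_fract, inv_inv]

lemma gaussMap_mem_irrIoo (hx : x ∈ irrIoo) : gaussMap x ∈ irrIoo := by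
  have hirr : Irrational (gaussMap x) := hx.2.inv.sub_intCast _
  exact ⟨⟨(Int.fract_nonneg _).lt_of_ne' hirr.ne_zero, Int.fract_lt_one _⟩, hirr⟩

lemma iterate_gaussMap_mem_irrIoo (hx : x ∈ irrIoo) (n : ℕ) : gaussMap^[n] x ∈ irrIoo := by
  induction n with
  | zero => exact hx
  | succ n ih => exact Function.iterate_succ_apply' gaussMap n x ▸ gaussMap_mem_irrIoo ih

lemma one_le_partQuot (hx : x ∈ irrIoo) (n : ℕ) : 1 ≤ partQuot x (n + 1) :=
  partQuot_succ x n ▸ one_le_partQuot_one (iterate_gaussMap_mem_irrIoo hx n).1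

end GaussMap

noncomputable def cfPrefix (x : ℝ) (n : ℕ) : List ℕ := List.ofFn fun i : Fin n => partQuot x (i + 1)

@[simp]
lemma length_cfPrefix (x : ℝ) (n : ℕ) : (cfPrefix x n).length = n := List.length_ofFn

lemma cfPrefix_succ (x : ℝ) (n : ℕ) :
    cfPrefix x (n + 1) = partQuot x 1 :: cfPrefix (gaussMap x) n := by
  simp [cfPrefix, List.ofFn_succ, partQuot_add_two]

lemma cfPrefix_succ' (x : ℝ) (n : ℕ) :
    cfPrefix x (n + 1) = cfPrefix x n ++ [partQuot x (n + 1)] := by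
  rw [cfPrefix, List.ofFn_succ', List.concat_eq_append]
  rfl

lemma one_le_of_mem_cfPrefix {x : ℝ} (hx : x ∈ irrIoo) {n a : ℕ} (ha : a ∈ cfPrefix x n) :
    1 ≤ a := by
  obtain ⟨i, rfl⟩ := List.mem_ofFn.1 ha
  exact one_le_partQuot hx i

/-- `cfMobius [a₁, …, aₙ] t = [a₁, …, aₙ + t]`. -/
noncomputable def cfMobius : List ℕ → ℝ → ℝ
  | [], t => t
  | a :: w, t => ((a : ℝ) + cfMobius w t)⁻¹

lemma cfMobius_cfPrefix {x : ℝ} (hx : x ∈ irrIoo) (n : ℕ) :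
    cfMobius (cfPrefix x n) (gaussMap^[n] x) = x := by
  induction n generalizing x with
  | zero => rfl
  | succ n ih =>
    rw [cfPrefix_succ, cfMobius, Function.iterate_succ_apply, ih (gaussMap_mem_irrIoo hx),
      inv_partQuot_one_add_gaussMap hx.1]

/-- `cfMat [a₁, …, aₙ] = !![pₙ₋₁, pₙ; qₙ₋₁, qₙ]`. -/
noncomputable def cfMat (w : List ℕ) : Matrix (Fin 2) (Fin 2) ℝ :=
  (w.map fun a => !![0, 1; 1, (a : ℝ)]).prod

lemma cfMat_cons (a : ℕ) (w : List ℕ) : cfMat (a :: w) = !![0, 1; 1, (a : ℝ)] * cfMat w := by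
  simp [cfMat]

lemma cfMat_append_singleton (w : List ℕ) (b : ℕ) :
    cfMat (w ++ [b]) = cfMat w * !![0, 1; 1, (b : ℝ)] := by
  simp [cfMat]

lemma cfMat_append_singleton_one_zero (w : List ℕ) (b : ℕ) :
    cfMat (w ++ [b]) 1 0 = cfMat w 1 1 := by
  simp [cfMat_append_singleton, Matrix.mul_apply, Fin.sum_univ_two]

lemma cfMat_append_singleton_one_one (w : List ℕ) (b : ℕ) :
    cfMat (w ++ [b]) 1 1 = cfMat w 1 0 + b * cfMat w 1 1 := by
  simp [cfMat_append_singleton, Matrix.mul_apply, Fin.sum_univ_two, mul_comm]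

lemma det_cfMat (w : List ℕ) : (cfMat w).det = (-1) ^ w.length := by
  induction w with
  | nil => simp [cfMat]
  | cons a w ih =>
    rw [cfMat_cons, Matrix.det_mul, ih, Matrix.det_fin_two_of, List.length_cons, pow_succ']
    ring

lemma cfMat_bottom_row_bounds {w : List ℕ} (hw : ∀ a ∈ w, 1 ≤ a) :
    0 ≤ cfMat w 1 0 ∧ 1 ≤ cfMat w 1 1 := by
  induction w using List.reverseRecOn with
  | nil => simp [cfMat]
  | append_singleton w b ih =>
    obtain ⟨hC, hD⟩ := ih fun a ha => hw a (List.mem_append_left _ ha)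
    have hb : (1 : ℝ) ≤ b := by exact_mod_cast hw b (by simp)
    rw [cfMat_append_singleton_one_zero, cfMat_append_singleton_one_one]
    exact ⟨by linarith, by nlinarith⟩

lemma cfMobius_eq {w : List ℕ} (hw : ∀ a ∈ w, 1 ≤ a) {t : ℝ} (ht : 0 ≤ t) :
    cfMobius w t = (cfMat w 0 0 * t + cfMat w 0 1) / (cfMat w 1 0 * t + cfMat w 1 1) := by
  induction w with
  | nil => simp [cfMobius, cfMat]
  | cons a w ih =>
    obtain ⟨hC, hD⟩ := cfMat_bottom_row_bounds fun b hb => hw b (List.mem_cons_of_mem a hb)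
    have hden : cfMat w 1 0 * t + cfMat w 1 1 ≠ 0 := by positivity
    rw [cfMobius, ih fun b hb => hw b (List.mem_cons_of_mem a hb), cfMat_cons]
    simp only [Matrix.mul_apply, Fin.sum_univ_two, Matrix.of_apply, Matrix.cons_val',
      Matrix.cons_val_zero, Matrix.cons_val_one, Matrix.cons_val_fin_one, zero_mul, one_mul, zero_add]
    field_simp
    ring

section Cylinders

variable {w : List ℕ}

def cfCylinder (w : List ℕ) : Set ℝ := {x ∈ irrIoo | cfPrefix x w.length = w}

/-- `1 / (qₙ (qₙ + qₙ₋₁))`, the distance between `cfMobius w 0` and `cfMobius w 1`. -/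
noncomputable def cfCylLength (w : List ℕ) : ℝ := (cfMat w 1 1 * (cfMat w 1 0 + cfMat w 1 1))⁻¹

lemma cfCylinder_subset_uIcc (hw : ∀ a ∈ w, 1 ≤ a) :
    cfCylinder w ⊆ Set.uIcc (cfMobius w 0) (cfMobius w 1) := by
  rintro x ⟨hx, hxw⟩
  obtain ⟨hC, hD⟩ := cfMat_bottom_row_bounds hw
  have ht := (iterate_gaussMap_mem_irrIoo hx w.length).1
  rw [← cfMobius_cfPrefix hx w.length, hxw, cfMobius_eq hw ht.1.le, cfMobius_eq hw le_rfl,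
    cfMobius_eq hw zero_le_one]
  exact mobius_mem_uIcc hC (by linarith) (Set.Ioo_subset_Icc_self ht)

lemma volume_cfCylinder_le (hw : ∀ a ∈ w, 1 ≤ a) :
    volume (cfCylinder w) ≤ ENNReal.ofReal (cfCylLength w) := by
  obtain ⟨hC, hD⟩ := cfMat_bottom_row_bounds hw
  have hdet : |cfMat w 0 0 * cfMat w 1 1 - cfMat w 0 1 * cfMat w 1 0| = 1 := by
    rw [← Matrix.det_fin_two, det_cfMat, abs_pow, abs_neg, abs_one, one_pow]
  have hden : 0 < (cfMat w 1 0 * 1 + cfMat w 1 1) * (cfMat w 1 0 * 0 + cfMat w 1 1) := by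
    positivity
  refine (measure_mono (cfCylinder_subset_uIcc hw)).trans_eq ?_
  rw [Real.volume_interval, cfMobius_eq hw zero_le_one, cfMobius_eq hw le_rfl,
    mobius_sub_mobius (by positivity) (by positivity), abs_div, abs_mul, hdet, abs_of_pos hden,
    cfCylLength]
  congr 1
  ring

lemma cfCylLength_nonneg (hw : ∀ a ∈ w, 1 ≤ a) : 0 ≤ cfCylLength w := by
  obtain ⟨hC, hD⟩ := cfMat_bottom_row_bounds hw
  unfold cfCylLength
  positivity

lemma cfCylLength_append_singleton (w : List ℕ) (b : ℕ) :
    cfCylLength (w ++ [b]) = ((cfMat w 1 0 + b * cfMat w 1 1) *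
      (cfMat w 1 1 + (cfMat w 1 0 + b * cfMat w 1 1)))⁻¹ := by
  rw [cfCylLength, cfMat_append_singleton_one_zero, cfMat_append_singleton_one_one]

lemma sum_cfCylLength_append_le (hw : ∀ a ∈ w, 1 ≤ a) (K : ℕ) :
    ∑ b ∈ Finset.Ico 1 K, cfCylLength (w ++ [b]) ≤ (1 - (K : ℝ)⁻¹) * cfCylLength w := by
  obtain ⟨hC, hD⟩ := cfMat_bottom_row_bounds hw
  simp only [cfCylLength_append_singleton]
  exact sum_Ico_inv_mul_le hC (by linarith) K

lemma volume_cfCylinder_inter_partQuot_lt_le (j : ℕ) (hw : ∀ a ∈ w, 1 ≤ a) (k : ℕ → ℕ) :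
    volume {x ∈ cfCylinder w | ∀ i < j, partQuot x (w.length + i + 1) < k i} ≤
      ENNReal.ofReal ((∏ i ∈ Finset.range j, (1 - (k i : ℝ)⁻¹)) * cfCylLength w) := by
  induction j generalizing w k with
  | zero => simpa using volume_cfCylinder_le hw
  | succ j ih =>
    set P := ∏ i ∈ Finset.range j, (1 - (k (i + 1) : ℝ)⁻¹)
    have hP : 0 ≤ P := Finset.prod_nonneg fun i _ => sub_nonneg.2 (Nat.cast_inv_le_one _)
    have hwb : ∀ b ∈ Finset.Ico 1 (k 0), ∀ a ∈ w ++ [b], 1 ≤ a := fun b hb a ha => by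
      rcases List.mem_append.1 ha with ha | ha
      · exact hw a ha
      · exact List.mem_singleton.1 ha ▸ (Finset.mem_Ico.1 hb).1
    have hsub : {x ∈ cfCylinder w | ∀ i < j + 1, partQuot x (w.length + i + 1) < k i} ⊆
        ⋃ b ∈ Finset.Ico 1 (k 0), {x ∈ cfCylinder (w ++ [b]) |
          ∀ i < j, partQuot x ((w ++ [b]).length + i + 1) < k (i + 1)} := by
      rintro x ⟨⟨hx, hxw⟩, hlt⟩
      refine Set.mem_iUnion₂.2 ⟨partQuot x (w.length + 1),
        Finset.mem_Ico.2 ⟨one_le_partQuot hx _, hlt 0 j.succ_pos⟩, ⟨hx, ?_⟩, fun i hi => ?_⟩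
      · rw [List.length_append, List.length_singleton, cfPrefix_succ', hxw]
      · rw [List.length_append, List.length_singleton, add_right_comm _ 1 i]
        exact hlt (i + 1) (by omega)
    calc volume {x ∈ cfCylinder w | ∀ i < j + 1, partQuot x (w.length + i + 1) < k i}
        ≤ ∑ b ∈ Finset.Ico 1 (k 0), volume {x ∈ cfCylinder (w ++ [b]) |
            ∀ i < j, partQuot x ((w ++ [b]).length + i + 1) < k (i + 1)} :=
          (measure_mono hsub).trans (measure_biUnion_finset_le _ _)
      _ ≤ ∑ b ∈ Finset.Ico 1 (k 0), ENNReal.ofReal (P * cfCylLength (w ++ [b])) :=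
          Finset.sum_le_sum fun b hb => ih (hwb b hb) _
      _ = ENNReal.ofReal (P * ∑ b ∈ Finset.Ico 1 (k 0), cfCylLength (w ++ [b])) := by
          rw [Finset.mul_sum, ENNReal.ofReal_sum_of_nonneg fun b hb =>
            mul_nonneg hP (cfCylLength_nonneg (hwb b hb))]
      _ ≤ ENNReal.ofReal (P * ((1 - (k 0 : ℝ)⁻¹) * cfCylLength w)) :=
          ENNReal.ofReal_le_ofReal (mul_le_mul_of_nonneg_left (sum_cfCylLength_append_le hw _) hP)
      _ = ENNReal.ofReal ((∏ i ∈ Finset.range (j + 1), (1 - (k i : ℝ)⁻¹)) * cfCylLength w) := by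
          rw [Finset.prod_range_succ', mul_assoc]

lemma volume_cfCylinder_inter_forall_partQuot_lt (hw : ∀ a ∈ w, 1 ≤ a) {φ : ℕ → ℕ}
    (hφ : ¬ Summable fun n => (φ n : ℝ)⁻¹) :
    volume {x ∈ cfCylinder w | ∀ i, partQuot x (w.length + i + 1) < φ (w.length + i + 1)} = 0 := by
  have hshift : ¬ Summable fun i => (φ (w.length + i + 1) : ℝ)⁻¹ := by
    refine fun h => hφ <| (summable_nat_add_iff (w.length + 1)).1 <| h.congr fun i => ?_
    rw [show w.length + i + 1 = i + (w.length + 1) by omega]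
  have hlim := (ENNReal.tendsto_ofReal ((tendsto_prod_one_sub_inv_nhds_zero hshift).mul_const
    (cfCylLength w))).comp tendsto_id
  rw [zero_mul, ENNReal.ofReal_zero] at hlim
  refine le_antisymm (ge_of_tendsto' hlim fun j => ?_) bot_le
  refine (measure_mono ?_).trans (volume_cfCylinder_inter_partQuot_lt_le j hw _)
  exact fun x hx => ⟨hx.1, fun i _ => hx.2 i⟩

end Cylinders

theorem volume_eventually_partQuot_lt {φ : ℕ → ℕ} (hφ : ¬ Summable fun n => (φ n : ℝ)⁻¹) :
    volume {x ∈ irrIoo | ∀ᶠ n in atTop, partQuot x n < φ n} = 0 := by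
  refine measure_mono_null (t := ⋃ w : {w : List ℕ // ∀ a ∈ w, 1 ≤ a}, {x ∈ cfCylinder w |
    ∀ i, partQuot x (w.1.length + i + 1) < φ (w.1.length + i + 1)}) ?_
    (measure_iUnion_null fun w => volume_cfCylinder_inter_forall_partQuot_lt w.2 hφ)
  rintro x ⟨hx, hlt⟩
  obtain ⟨N, hN⟩ := eventually_atTop.1 hlt
  exact Set.mem_iUnion.2 ⟨⟨cfPrefix x N, fun a => one_le_of_mem_cfPrefix hx⟩,
    ⟨hx, by rw [length_cfPrefix]⟩, fun i => hN _ (by rw [length_cfPrefix]; omega)⟩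

/-- The set `W = {x ∈ (0,1) : x` irrational and `aₙ ≥ n·log n` for infinitely many `n}`
has full Lebesgue measure in `(0,1)`. -/
theorem borel_bernstein_infinite :
    volume ((Set.Ioo (0 : ℝ) 1) \
      {x : ℝ | Irrational x ∧
        {n : ℕ | 1 ≤ n ∧ (n : ℝ) * Real.log n ≤ (partQuot x n : ℝ)}.Infinite}) = 0 := by
  have hrat : volume {x : ℝ | ¬ Irrational x} = 0 :=
    measure_mono_null (fun _ => not_not.1) ((Set.countable_range ((↑) : ℚ → ℝ)).measure_zero _)
  refine measure_mono_null ?_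
    (measure_union_null hrat (volume_eventually_partQuot_lt not_summable_inv_ceil_mul_log))
  rintro x ⟨hx, hxW⟩
  by_cases hirr : Irrational x
  · have hfin : ∀ᶠ n : ℕ in atTop, ¬ (1 ≤ n ∧ (n : ℝ) * log n ≤ partQuot x n) := by
      rw [← not_frequently, Nat.frequently_atTop_iff_infinite]
      exact fun h => hxW ⟨hirr, h⟩
    refine Or.inr ⟨⟨hx, hirr⟩, ?_⟩
    filter_upwards [hfin, eventually_ge_atTop 1] with n hn h1
    exact Nat.lt_ceil.2 (not_le.1 fun h => hn ⟨h1, h⟩)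
  · exact Or.inl hirr
end

section
/- For every ε > 0, the set U_ε = {x ∈ (0,1) : x irrational and a_n > n·(log n)^{1+ε} for only finitely many n} has full Lebesgue measure in (0,1), where a_n are the partial quotients of x. -/
/-!
The Gauss measure `dx / (1 + x)` on `(0, 1)` is invariant under the Gauss map `T x = {1/x}`:
its inverse branches `y ↦ 1 / (k + 1 + y)` carry the density `1 / (1 + y)` to the
telescoping sum `∑ₖ 1 / ((k + 1 + y)(k + 2 + y)) = 1 / (1 + y)`. Its density lies between
`1/2` and `1`, so `{x ∈ (0,1) : Tⁿ x ∈ A}` has Lebesgue measure at most `2 |A|`.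
Since `aₙ(x) > c` forces `Tⁿ⁻¹ x < 1 / c`, the event `aₙ > n (log n)^(1+ε)` has measure
at most `2 / (n (log n)^(1+ε))`, which is summable by Cauchy condensation, and
Borel–Cantelli concludes.
-/

open Filter MeasureTheory Real Topology

open Set ENNReal Function

lemma measurable_gaussMap : Measurable gaussMap :=
  measurable_fract.comp measurable_inv

lemma countable_setOf_gaussMap_eq_zero : {x : ℝ | gaussMap x = 0}.Countable := by
  refine (countable_range fun m : ℤ => (m : ℝ)⁻¹).mono fun x hx => ?_
  obtain ⟨m, hm⟩ := Int.fract_eq_zero_iff.1 hx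
  exact ⟨m, show (m : ℝ)⁻¹ = x by rw [hm, inv_inv]⟩

/-- The inverse branch of `gaussMap` with values in `(1/(k+2), 1/(k+1)]`. -/
noncomputable def gaussBranch (k : ℕ) (y : ℝ) : ℝ := ((k : ℝ) + 1 + y)⁻¹

section

variable {k : ℕ} {y : ℝ} {B : Set ℝ}

lemma gaussBranch_mem_Ioo (hy : y ∈ Ioo (0 : ℝ) 1) :
    gaussBranch k y ∈ Ioo ((k + 2 : ℝ)⁻¹) ((k + 1 : ℝ)⁻¹) := by
  obtain ⟨h0, h1⟩ := hy
  exact ⟨inv_strictAnti₀ (by positivity) (by linarith),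
    inv_strictAnti₀ (by positivity) (by linarith)⟩

lemma gaussBranch_mem_Ioo_zero_one (hy : y ∈ Ioo (0 : ℝ) 1) :
    gaussBranch k y ∈ Ioo (0 : ℝ) 1 := by
  obtain ⟨h0, h1⟩ := gaussBranch_mem_Ioo (k := k) hy
  exact ⟨(inv_pos.2 (by positivity)).trans h0,
    h1.trans_le (inv_le_one_of_one_le₀ (by simp))⟩

lemma gaussMap_gaussBranch (hy : y ∈ Ico (0 : ℝ) 1) : gaussMap (gaussBranch k y) = y := by
  rw [gaussMap, gaussBranch, inv_inv,
    show (k : ℝ) + 1 + y = ((k + 1 : ℕ) : ℤ) + y by push_cast; ring,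
    Int.fract_intCast_add, Int.fract_eq_self.2 hy]

lemma hasDerivAt_gaussBranch (hy : 0 ≤ y) :
    HasDerivAt (gaussBranch k) (-((k + 1 + y : ℝ) ^ 2)⁻¹) y := by
  have := ((hasDerivAt_id y).const_add ((k : ℝ) + 1)).inv (by positivity)
  rwa [id, neg_div, one_div] at this

lemma gaussBranch_injective (k : ℕ) : Function.Injective (gaussBranch k) :=
  fun _ _ h => by simpa [gaussBranch] using h

lemma pairwise_disjoint_image_gaussBranch (hB : B ⊆ Ioo 0 1) :
    Pairwise (Disjoint on fun k : ℕ => gaussBranch k '' B) := by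
  refine pairwise_disjoint_on _ |>.2 fun i j hij => disjoint_left.2 ?_
  rintro _ ⟨y, hy, rfl⟩ ⟨z, hz, hzy⟩
  have h1 := (gaussBranch_mem_Ioo (k := i) (hB hy)).1
  have h2 := (gaussBranch_mem_Ioo (k := j) (hB hz)).2
  have hij' : (i : ℝ) + 1 ≤ j := by exact_mod_cast hij
  have : ((j : ℝ) + 1)⁻¹ ≤ ((i : ℝ) + 2)⁻¹ := inv_anti₀ (by positivity) (by linarith)
  linarith

lemma Ioo_inter_preimage_gaussMap_eq_iUnion (hB : B ⊆ Ioo 0 1) :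
    Ioo (0 : ℝ) 1 ∩ gaussMap ⁻¹' B = ⋃ k : ℕ, gaussBranch k '' B := by
  ext x
  simp only [mem_inter_iff, mem_preimage, mem_iUnion, mem_image]
  constructor
  · rintro ⟨⟨hx0, hx1⟩, hxB⟩
    have hm : 1 ≤ ⌊x⁻¹⌋ := Int.le_floor.2 (by exact_mod_cast (one_lt_inv₀ hx0).2 hx1 |>.le)
    refine ⟨(⌊x⁻¹⌋ - 1).toNat, _, hxB, ?_⟩
    have hk : (((⌊x⁻¹⌋ - 1).toNat : ℕ) : ℝ) = ⌊x⁻¹⌋ - 1 := by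
      exact_mod_cast Int.toNat_of_nonneg (by omega : 0 ≤ ⌊x⁻¹⌋ - 1)
    rw [gaussBranch, gaussMap, Int.fract, hk,
      show (⌊x⁻¹⌋ : ℝ) - 1 + 1 + (x⁻¹ - ⌊x⁻¹⌋) = x⁻¹ by ring, inv_inv]
  · rintro ⟨k, y, hyB, rfl⟩
    have hy := hB hyB
    exact ⟨gaussBranch_mem_Ioo_zero_one hy, by rwa [gaussMap_gaussBranch (Ioo_subset_Ico_self hy)]⟩

lemma hasSum_inv_sub_inv_succ (hy : 0 ≤ y) :
    HasSum (fun k : ℕ => (k + 1 + y : ℝ)⁻¹ - (k + 2 + y : ℝ)⁻¹) (1 + y)⁻¹ := by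
  have hsub : ∀ k : ℕ, (k + 2 + y : ℝ)⁻¹ ≤ (k + 1 + y : ℝ)⁻¹ :=
    fun k => inv_anti₀ (by positivity) (by linarith)
  rw [hasSum_iff_tendsto_nat_of_nonneg (fun k => sub_nonneg.2 (hsub k))]
  have hpartial : ∀ n : ℕ, ∑ k ∈ Finset.range n, ((k + 1 + y : ℝ)⁻¹ - (k + 2 + y : ℝ)⁻¹)
      = (1 + y)⁻¹ - (n + 1 + y)⁻¹ := fun n => by
    simpa [add_assoc, one_add_one_eq_two] using
      Finset.sum_range_sub' (fun k : ℕ => (k + 1 + y : ℝ)⁻¹) n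
  simp only [hpartial]
  simpa using tendsto_const_nhds.sub <| tendsto_inv_atTop_zero.comp <|
    tendsto_atTop_add_const_right _ y <|
      tendsto_atTop_add_const_right _ 1 tendsto_natCast_atTop_atTop

noncomputable def gaussDensity (x : ℝ) : ℝ≥0∞ := ENNReal.ofReal (1 + x)⁻¹

@[fun_prop]
lemma measurable_gaussDensity : Measurable gaussDensity := by
  unfold gaussDensity; fun_prop

/-- The transfer operator of `gaussMap` fixes `gaussDensity`. -/
lemma tsum_gaussDensity_gaussBranch (hy : 0 ≤ y) :
    ∑' k : ℕ, ENNReal.ofReal ((k + 1 + y : ℝ) ^ 2)⁻¹ * gaussDensity (gaussBranch k y)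
      = gaussDensity y := by
  have hterm : ∀ k : ℕ, ((k + 1 + y : ℝ) ^ 2)⁻¹ * (1 + gaussBranch k y)⁻¹
      = (k + 1 + y : ℝ)⁻¹ - (k + 2 + y : ℝ)⁻¹ := fun k => by
    have : (0 : ℝ) < k + 1 + y := by positivity
    rw [gaussBranch]
    field_simp
    ring
  have hnonneg : ∀ k : ℕ, 0 ≤ ((k + 1 + y : ℝ) ^ 2)⁻¹ * (1 + gaussBranch k y)⁻¹ := fun k => by
    rw [gaussBranch]; positivity
  have hsum : HasSum (fun k : ℕ => ((k + 1 + y : ℝ) ^ 2)⁻¹ * (1 + gaussBranch k y)⁻¹)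
      (1 + y)⁻¹ := by
    simpa only [hterm] using hasSum_inv_sub_inv_succ hy
  calc ∑' k : ℕ, ENNReal.ofReal ((k + 1 + y : ℝ) ^ 2)⁻¹ * gaussDensity (gaussBranch k y)
      = ∑' k : ℕ, ENNReal.ofReal (((k + 1 + y : ℝ) ^ 2)⁻¹ * (1 + gaussBranch k y)⁻¹) :=
        tsum_congr fun k => (ENNReal.ofReal_mul (by positivity)).symm
    _ = gaussDensity y := by
        rw [← ENNReal.ofReal_tsum_of_nonneg hnonneg hsum.summable, hsum.tsum_eq, gaussDensity]

/-- The Gauss measure `dx / (1 + x)` on `(0, 1)`, without the normalising factor `1 / log 2`. -/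
noncomputable def gaussMeasure : Measure ℝ :=
  (volume.restrict (Ioo 0 1)).withDensity gaussDensity

lemma gaussMeasure_apply {A : Set ℝ} (hA : MeasurableSet A) :
    gaussMeasure A = ∫⁻ x in Ioo 0 1 ∩ A, gaussDensity x := by
  rw [gaussMeasure, withDensity_apply _ hA, Measure.restrict_restrict hA, inter_comm]

lemma measurableSet_image_gaussBranch (k : ℕ) (hB : MeasurableSet B) :
    MeasurableSet (gaussBranch k '' B) :=
  ((measurable_const.add measurable_id).inv.measurableEmbedding
    (gaussBranch_injective k)).measurableSet_image.2 hB

lemma setLIntegral_image_gaussBranch (k : ℕ) (hBm : MeasurableSet B) (hB : B ⊆ Ioo 0 1)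
    (f : ℝ → ℝ≥0∞) :
    ∫⁻ x in gaussBranch k '' B, f x
      = ∫⁻ y in B, ENNReal.ofReal ((k + 1 + y : ℝ) ^ 2)⁻¹ * f (gaussBranch k y) := by
  rw [lintegral_image_eq_lintegral_abs_deriv_mul hBm
    (fun y hy => (hasDerivAt_gaussBranch (hB hy).1.le).hasDerivWithinAt)
    (gaussBranch_injective k).injOn f]
  refine setLIntegral_congr_fun hBm fun y hy => ?_
  rw [abs_neg, abs_of_pos (by have := (hB hy).1; positivity)]

lemma gaussMeasure_preimage_gaussMap {A : Set ℝ} (hA : MeasurableSet A) :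
    gaussMeasure (gaussMap ⁻¹' A) = gaussMeasure A := by
  set B := A ∩ Ioo 0 1
  have hBm : MeasurableSet B := hA.inter measurableSet_Ioo
  have hB : B ⊆ Ioo 0 1 := inter_subset_right
  -- `gaussMap` sends `(0, 1)` into `[0, 1)`, and only countably many points to `0`.
  have hae : (Ioo 0 1 ∩ gaussMap ⁻¹' A : Set ℝ) =ᵐ[volume] (Ioo 0 1 ∩ gaussMap ⁻¹' B : Set ℝ) := by
    refine ae_eq_set.2 ⟨measure_mono_null (fun x hx => ?_)
      (countable_setOf_gaussMap_eq_zero.measure_zero volume),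
      measure_mono_null (fun x hx => (hx.2 ⟨hx.1.1, hx.1.2.1⟩).elim) measure_empty⟩
    obtain ⟨⟨hx, hxA⟩, hxB⟩ := hx
    have hT : gaussMap x ∈ Ico (0 : ℝ) 1 := ⟨Int.fract_nonneg _, Int.fract_lt_one _⟩
    by_contra hne
    exact hxB ⟨hx, hxA, lt_of_le_of_ne hT.1 (Ne.symm hne), hT.2⟩
  have hmeas : ∀ k : ℕ, AEMeasurable
      (fun y => ENNReal.ofReal ((k + 1 + y : ℝ) ^ 2)⁻¹ * gaussDensity (gaussBranch k y))
      (volume.restrict B) := fun k => by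
    unfold gaussBranch; exact (by fun_prop : Measurable _).aemeasurable
  calc gaussMeasure (gaussMap ⁻¹' A)
      = ∫⁻ x in ⋃ k : ℕ, gaussBranch k '' B, gaussDensity x := by
        rw [gaussMeasure_apply (measurable_gaussMap hA), setLIntegral_congr hae,
          Ioo_inter_preimage_gaussMap_eq_iUnion hB]
    _ = ∑' k : ℕ, ∫⁻ y in B,
          ENNReal.ofReal ((k + 1 + y : ℝ) ^ 2)⁻¹ * gaussDensity (gaussBranch k y) := by
        rw [lintegral_iUnion (fun k => measurableSet_image_gaussBranch k hBm)
          (pairwise_disjoint_image_gaussBranch hB)]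
        exact tsum_congr fun k => setLIntegral_image_gaussBranch k hBm hB _
    _ = ∫⁻ y in B, gaussDensity y := by
        rw [← lintegral_tsum hmeas]
        exact setLIntegral_congr_fun hBm fun y hy => tsum_gaussDensity_gaussBranch (hB hy).1.le
    _ = gaussMeasure A := by rw [gaussMeasure_apply hA, inter_comm]

end

theorem measurePreserving_gaussMap : MeasurePreserving gaussMap gaussMeasure gaussMeasure :=
  ⟨measurable_gaussMap, Measure.ext fun A hA => by
    rw [Measure.map_apply measurable_gaussMap hA, gaussMeasure_preimage_gaussMap hA]⟩

lemma gaussMeasure_le_volume : gaussMeasure ≤ volume :=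
  calc gaussMeasure ≤ (volume.restrict (Ioo 0 1)).withDensity 1 := by
        refine withDensity_mono <| (ae_restrict_mem measurableSet_Ioo).mono fun x hx => ?_
        exact ENNReal.ofReal_le_one.2 (inv_le_one_of_one_le₀ (by linarith [hx.1]))
    _ = volume.restrict (Ioo 0 1) := withDensity_one
    _ ≤ volume := Measure.restrict_le_self

lemma volume_restrict_le_two_smul_gaussMeasure :
    volume.restrict (Ioo (0 : ℝ) 1) ≤ (2 : ℝ≥0∞) • gaussMeasure :=
  calc volume.restrict (Ioo (0 : ℝ) 1) = (volume.restrict (Ioo 0 1)).withDensity 1 :=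
        withDensity_one.symm
    _ ≤ (volume.restrict (Ioo 0 1)).withDensity ((2 : ℝ≥0∞) • gaussDensity) := by
        refine withDensity_mono <| (ae_restrict_mem measurableSet_Ioo).mono fun x hx => ?_
        have hx2 : (1 : ℝ) ≤ 2 * (1 + x)⁻¹ := by
          rw [← div_eq_mul_inv, one_le_div (by linarith [hx.1])]; linarith [hx.2]
        calc (1 : ℝ≥0∞) = ENNReal.ofReal 1 := ENNReal.ofReal_one.symm
          _ ≤ ENNReal.ofReal (2 * (1 + x)⁻¹) := ENNReal.ofReal_le_ofReal hx2
          _ = ((2 : ℝ≥0∞) • gaussDensity) x := by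
            rw [ENNReal.ofReal_mul zero_le_two, ENNReal.ofReal_ofNat]; rfl
    _ = (2 : ℝ≥0∞) • gaussMeasure := withDensity_smul _ measurable_gaussDensity

lemma volume_restrict_preimage_gaussMap_iterate_le (n : ℕ) {A : Set ℝ} (hA : MeasurableSet A) :
    volume.restrict (Ioo (0 : ℝ) 1) (gaussMap^[n] ⁻¹' A) ≤ 2 * volume A :=
  calc volume.restrict (Ioo (0 : ℝ) 1) (gaussMap^[n] ⁻¹' A)
      ≤ 2 * gaussMeasure (gaussMap^[n] ⁻¹' A) :=
        Measure.le_iff'.1 volume_restrict_le_two_smul_gaussMeasure _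
    _ = 2 * gaussMeasure A := by
        rw [(measurePreserving_gaussMap.iterate n).measure_preimage hA.nullMeasurableSet]
    _ ≤ 2 * volume A := by gcongr; exact gaussMeasure_le_volume

lemma summable_inv_nat_mul_log_rpow {p : ℝ} (hp : 1 < p) :
    Summable fun n : ℕ => ((n : ℝ) * Real.log n ^ p)⁻¹ := by
  have hcondensed : ∀ k : ℕ, (2 : ℝ) ^ k * (((2 ^ k : ℕ) : ℝ) * Real.log (2 ^ k : ℕ) ^ p)⁻¹
      = (Real.log 2 ^ p)⁻¹ * ((k : ℝ) ^ p)⁻¹ := fun k => by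
    rw [Nat.cast_pow, Nat.cast_ofNat, Real.log_pow, mul_comm (k : ℝ),
      Real.mul_rpow (Real.log_nonneg one_le_two) k.cast_nonneg, mul_inv, ← mul_assoc,
      mul_inv_cancel₀ (by positivity), one_mul, mul_inv]
  refine (summable_condensed_iff_of_eventually_nonneg
    (Eventually.of_forall fun n => by positivity) ?_).1 ?_
  · filter_upwards [eventually_ge_atTop 2] with n hn
    have hn' : (1 : ℝ) < n := by exact_mod_cast hn
    gcongr
    · exact mul_pos (by linarith) (rpow_pos_of_pos (Real.log_pos hn') p)
    · linarith
    · omega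
  · simpa only [hcondensed] using (Real.summable_nat_rpow_inv.2 hp).mul_left _

lemma gaussMap_iterate_mem_Ioo_of_lt_partQuot {x c : ℝ} {n : ℕ} (hc : 0 < c)
    (h : c < partQuot x n) : gaussMap^[n - 1] x ∈ Ioo 0 c⁻¹ := by
  set y := gaussMap^[n - 1] x
  have hfloor : 0 ≤ ⌊y⁻¹⌋ := by
    by_contra hneg
    rw [partQuot, Int.toNat_of_nonpos (not_le.1 hneg).le, Nat.cast_zero] at h
    linarith
  have hcy : c < y⁻¹ := by
    have hcast : ((⌊y⁻¹⌋.toNat : ℕ) : ℝ) = ⌊y⁻¹⌋ := by exact_mod_cast Int.toNat_of_nonneg hfloor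
    exact h.trans_le (hcast ▸ Int.floor_le y⁻¹)
  have hy : 0 < y := inv_pos.1 (hc.trans hcy)
  exact ⟨hy, (lt_inv_comm₀ hy hc).2 hcy⟩

/-- For every `ε > 0`, the set
`U_ε = {x ∈ (0,1) : x` irrational and `aₙ > n·(log n)^{1+ε}` for only finitely many `n}`
has full Lebesgue measure in `(0,1)`. -/
theorem borel_bernstein_finite (ε : ℝ) (hε : 0 < ε) :
    volume ((Set.Ioo (0 : ℝ) 1) \
      {x : ℝ | Irrational x ∧
        {n : ℕ | 1 ≤ n ∧ (n : ℝ) * Real.log n ^ (1 + ε) < (partQuot x n : ℝ)}.Finite}) = 0 := by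
  set c : ℕ → ℝ := fun n => n * Real.log n ^ (1 + ε)
  have hc : ∀ n, 2 ≤ n → 0 < c n := fun n hn => by
    have hn' : (1 : ℝ) < n := by exact_mod_cast hn
    exact mul_pos (by linarith) (rpow_pos_of_pos (Real.log_pos hn') _)
  set s : ℕ → Set ℝ := fun n => gaussMap^[n - 1] ⁻¹' Ioo 0 (c n)⁻¹
  have hsum : ∑' n, volume.restrict (Ioo (0 : ℝ) 1) (s n) ≠ ∞ := by
    refine ne_top_of_le_ne_top ?_ (ENNReal.tsum_le_tsum fun n =>
      volume_restrict_preimage_gaussMap_iterate_le (n - 1) measurableSet_Ioo)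
    simp_rw [ENNReal.tsum_mul_left, Real.volume_Ioo, sub_zero]
    rw [← ENNReal.ofReal_tsum_of_nonneg (fun n => by positivity)
      (summable_inv_nat_mul_log_rpow (by linarith))]
    exact mul_ne_top ofNat_ne_top ofReal_ne_top
  have hrat : ∀ᵐ x ∂volume.restrict (Ioo (0 : ℝ) 1), Irrational x :=
    ae_restrict_of_ae (measure_eq_zero_iff_ae_notMem.1 ((countable_range _).measure_zero volume))
  rw [sdiff_eq, inter_comm, ← Measure.restrict_apply' measurableSet_Ioo, ← mem_ae_iff]
  filter_upwards [ae_eventually_notMem hsum, hrat] with x hx hirr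
  refine ⟨hirr, not_infinite.1 fun hinf => ?_⟩
  obtain ⟨n, ⟨-, hlt⟩, hxn, hn⟩ := ((Nat.frequently_atTop_iff_infinite.2 hinf).and_eventually
    (hx.and (eventually_ge_atTop 2))).exists
  exact hxn (gaussMap_iterate_mem_Ioo_of_lt_partQuot (hc n hn) hlt)
end
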